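/- arXiv:1802.03324 — 3 statements merged into one kernel-verified Lean document; each statement's English description precedes it below -/
import Mathlib

section
/- Let r ∈ (0,1/2), k ∈ ℕ, and X be the attractor of the IFS {x ↦ rx, x ↦ rx + (1-r)} on [0,1]. Then the k-fold sumset kX is the attractor of the IFS consisting of the k+1 maps x ↦ rx + n(1-r) for n = 0, 1, ..., k, acting on [0,k]. -/
open Set Metric Filter Pointwise

/-- Smallest number of balls of radius `r` needed to cover `E`. -/
noncomputable def coverNum {X : Type*} [PseudoMetricSpace X] (E : Set X) (r : ℝ) : ℕ :=
  sInf {n : ℕ | ∃ S : Finset X, S.card = n ∧ E ⊆ ⋃ x ∈ S, Metric.ball x r}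

/-- Upper box dimension of a bounded set. -/
noncomputable def upperBoxDimBdd {X : Type*} [PseudoMetricSpace X] (E : Set X) : ℝ :=
  Filter.limsup (fun r : ℝ => Real.log (coverNum E r : ℝ) / (-Real.log r))
    (nhdsWithin 0 (Set.Ioi 0))

/-- Lower box dimension of a bounded set. -/
noncomputable def lowerBoxDimBdd {X : Type*} [PseudoMetricSpace X] (E : Set X) : ℝ :=
  Filter.liminf (fun r : ℝ => Real.log (coverNum E r : ℝ) / (-Real.log r))
    (nhdsWithin 0 (Set.Ioi 0))

/-- Upper box dimension, extended to unbounded sets via suprema over bounded subsets. -/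
noncomputable def upperBoxDim {X : Type*} [PseudoMetricSpace X] (E : Set X) : ℝ :=
  ⨆ K : {K : Set X // K ⊆ E ∧ Bornology.IsBounded K}, upperBoxDimBdd K.1

/-- Lower box dimension, extended to unbounded sets via suprema over bounded subsets. -/
noncomputable def lowerBoxDim {X : Type*} [PseudoMetricSpace X] (E : Set X) : ℝ :=
  ⨆ K : {K : Set X // K ⊆ E ∧ Bornology.IsBounded K}, lowerBoxDimBdd K.1

/-- Assouad dimension. -/
noncomputable def assouadDim {X : Type*} [PseudoMetricSpace X] (F : Set X) : ℝ :=
  sInf {s : ℝ | 0 ≤ s ∧ ∃ C > 0, ∀ x ∈ F, ∀ R > 0, ∀ r, 0 < r → r < R →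
    (coverNum (Metric.ball x R ∩ F) r : ℝ) ≤ C * (R / r) ^ s}

/-- Lower dimension. -/
noncomputable def lowerDim {X : Type*} [PseudoMetricSpace X] (F : Set X) : ℝ :=
  sSup {s : ℝ | 0 ≤ s ∧ ∃ C > 0, ∀ x ∈ F, ∀ R, 0 < R → R < Metric.diam F →
    ∀ r, 0 < r → r < R →
      C * (R / r) ^ s ≤ (coverNum (Metric.ball x R ∩ F) r : ℝ)}

/-- `n`-fold iterated sumset: `iterSumset F n = F + F + ⋯ + F` (`n` times), with
`iterSumset F 0 = {0}`. -/
def iterSumset {M : Type*} [AddMonoid M] (F : Set M) : ℕ → Set M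
  | 0 => {0}
  | n + 1 => iterSumset F n + F

/-- Distance set of a set in a metric space. -/
def distSet {X : Type*} [PseudoMetricSpace X] (F : Set X) : Set ℝ :=
  {r : ℝ | ∃ x ∈ F, ∃ y ∈ F, dist x y = r}

/-!
Write `T n x = r x + n (1 - r)` (this is `digitMap r (1 - r) n`).
Since `T m a + T n b = T (m + n) (a + b)`, adding `X = T 0 X ∪ T 1 X` to
`kX = ⋃_{n ≤ k} T n (kX)` gives `(k+1)X = ⋃_{n ≤ k+1} T n ((k+1)X)`, so the invariance
follows by induction on `k`; compactness and nonemptiness pass to sums.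
-/

theorem IsCompact.iterSumset {M : Type*} [AddMonoid M] [TopologicalSpace M] [ContinuousAdd M]
    {F : Set M} (hF : IsCompact F) (n : ℕ) : IsCompact (iterSumset F n) := by
  induction n with
  | zero => exact isCompact_singleton
  | succ n ih => exact ih.add hF

theorem Set.Nonempty.iterSumset {M : Type*} [AddMonoid M] {F : Set M} (hF : F.Nonempty)
    (n : ℕ) : (iterSumset F n).Nonempty := by
  induction n with
  | zero => exact singleton_nonempty 0
  | succ n ih => exact ih.add hF

theorem biUnion_range_union_succ {α : Type*} (f : ℕ → Set α) (k : ℕ) :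
    ⋃ n ∈ Finset.range (k + 1), (f n ∪ f (n + 1)) = ⋃ m ∈ Finset.range (k + 2), f m := by
  ext x
  simp only [mem_iUnion, Finset.mem_range, mem_union, exists_prop]
  constructor
  · rintro ⟨n, hn, h | h⟩
    exacts [⟨n, by omega, h⟩, ⟨n + 1, by omega, h⟩]
  · rintro ⟨_ | m, hm, h⟩
    exacts [⟨0, by omega, Or.inl h⟩, ⟨m, by omega, Or.inr h⟩]

section DigitMap

variable {R M : Type*} [Semiring R] [AddCommMonoid M] [Module R M]

def digitMap (r : R) (c : M) (n : ℕ) (x : M) : M := r • x + n • c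

theorem digitMap_image_add_image (r : R) (c : M) (m n : ℕ) (A B : Set M) :
    digitMap r c m '' A + digitMap r c n '' B = digitMap r c (m + n) '' (A + B) := by
  simp only [← image2_add, image2_image_left, image2_image_right, image_image2, digitMap,
    smul_add, add_nsmul]
  congr 1
  funext a b
  abel

theorem iterSumset_eq_biUnion_digitMap_image (r : R) (c : M) {X : Set M}
    (hX : X = digitMap r c 0 '' X ∪ digitMap r c 1 '' X) (k : ℕ) :
    iterSumset X k = ⋃ n ∈ Finset.range (k + 1), digitMap r c n '' iterSumset X k := by
  induction k with
  | zero => simp [iterSumset, digitMap]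
  | succ k ih =>
    set Y := iterSumset X k
    calc Y + X
        = (⋃ n ∈ Finset.range (k + 1), digitMap r c n '' Y) +
            (digitMap r c 0 '' X ∪ digitMap r c 1 '' X) := by rw [← ih, ← hX]
      _ = ⋃ n ∈ Finset.range (k + 1),
            (digitMap r c n '' (Y + X) ∪ digitMap r c (n + 1) '' (Y + X)) := by
          simp only [iUnion_add, add_union, digitMap_image_add_image, add_zero,
            iUnion_union_distrib]
      _ = ⋃ m ∈ Finset.range (k + 2), digitMap r c m '' (Y + X) :=
          biUnion_range_union_succ (fun m => digitMap r c m '' (Y + X)) k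

end DigitMap

theorem stmt6_general (r : ℝ) (k : ℕ) (X : Set ℝ)
    (hX : IsCompact X) (hne : X.Nonempty)
    (hinv : X = (fun x => r * x) '' X ∪ (fun x => r * x + (1 - r)) '' X) :
    IsCompact (iterSumset X k) ∧ (iterSumset X k).Nonempty ∧
      iterSumset X k =
        ⋃ n ∈ Finset.range (k + 1), (fun x => r * x + (n : ℝ) * (1 - r)) '' iterSumset X k := by
  have hT : ∀ n : ℕ, digitMap r (1 - r) n = fun x => r * x + (n : ℝ) * (1 - r) := fun n => by
    ext x
    simp [digitMap]
  refine ⟨hX.iterSumset k, hne.iterSumset k, ?_⟩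
  simp only [← hT]
  refine iterSumset_eq_biUnion_digitMap_image r (1 - r) ?_ k
  simpa only [hT, Nat.cast_zero, Nat.cast_one, zero_mul, one_mul, add_zero] using hinv

/-- Let `X` be the attractor of `{x ↦ rx, x ↦ rx + (1-r)}` with `r ∈ (0,1/2)`. Then the
`k`-fold sumset `kX` is the attractor of the IFS of the `k+1` maps `x ↦ rx + n(1-r)`,
`n = 0,…,k`; i.e. it is the (unique) nonempty compact set invariant under these maps. -/
theorem stmt6 (r : ℝ) (hr : r ∈ Set.Ioo (0 : ℝ) (1 / 2)) (k : ℕ) (X : Set ℝ)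
    (hX : IsCompact X) (hne : X.Nonempty)
    (hinv : X = (fun x => r * x) '' X ∪ (fun x => r * x + (1 - r)) '' X) :
    IsCompact (iterSumset X k) ∧ (iterSumset X k).Nonempty ∧
      iterSumset X k =
        ⋃ n ∈ Finset.range (k + 1), (fun x => r * x + (n : ℝ) * (1 - r)) '' iterSumset X k :=
  stmt6_general r k X hX hne hinv
end

section
/- For any F ⊆ ℝ^d, the upper box dimension of the distance set satisfies dim̄_B D(F) ≥ dim̄_B(F) / d. -/
open Set Metric Filter Pointwise

open scoped RealInnerProductSpace Topology

/-!
After a translation, a bounded set `K ⊆ ℝ^d` contains an affine basis `b₀, …, b_k` (`k ≤ d`) of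
the subspace it spans. Every point has a barycentric coordinate `≥ 1 / (k + 1)`; on the convex
compact piece where the `i`-th one is, a point `x` is a Lipschitz function of its distances to the
`k` points `b_j`, `j ≠ i`. Indeed `‖x - y‖² - ‖x' - y‖² = 2⟪x - x', m - y⟫` for the midpoint `m`,
the vectors `m - b_j` (`j ≠ i`) span, and compactness makes this quantitative. Covering `D(K)` by
`N_r(D(K))` intervals of length `2r` therefore cuts `K` into `O(N_r(D(K))^k)` cells of diameter
`O(r)`, so `N_r(K) ≲ N_r(D(K))^d` and `dim̄_B K ≤ d · dim̄_B D(K)`.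
-/

section CoverNum

variable {X : Type*} [PseudoMetricSpace X] {E : Set X} {r : ℝ}

lemma coverNum_le_card (S : Finset X) (h : E ⊆ ⋃ x ∈ S, ball x r) : coverNum E r ≤ S.card :=
  Nat.sInf_le ⟨S, rfl, h⟩

lemma exists_card_eq_coverNum (h : ∃ S : Finset X, E ⊆ ⋃ x ∈ S, ball x r) :
    ∃ S : Finset X, S.card = coverNum E r ∧ E ⊆ ⋃ x ∈ S, ball x r :=
  let ⟨S, hS⟩ := h
  Nat.sInf_mem (s := {n | ∃ S : Finset X, S.card = n ∧ E ⊆ ⋃ x ∈ S, ball x r})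
    ⟨S.card, S, rfl, hS⟩

lemma coverNum_eq_zero_of_not_exists (h : ¬ ∃ S : Finset X, E ⊆ ⋃ x ∈ S, ball x r) :
    coverNum E r = 0 := by
  rw [coverNum, Nat.sInf_eq_zero]
  refine Or.inr (eq_empty_of_forall_notMem ?_)
  rintro n ⟨S, -, hS⟩
  exact h ⟨S, hS⟩

lemma coverNum_empty (r : ℝ) : coverNum (∅ : Set X) r = 0 :=
  Nat.le_zero.mp (coverNum_le_card ∅ (empty_subset _))

lemma coverNum_biUnion_le {ι : Type*} (I : Finset ι) (G : ι → Set X) (r : ℝ) :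
    coverNum (⋃ i ∈ I, G i) r ≤ ∑ i ∈ I, coverNum (G i) r := by
  classical
  by_cases h : ∀ i ∈ I, ∃ S : Finset X, G i ⊆ ⋃ x ∈ S, ball x r
  · choose! S hS hcover using fun i hi => exists_card_eq_coverNum (h i hi)
    calc coverNum (⋃ i ∈ I, G i) r ≤ (I.biUnion S).card := by
          refine coverNum_le_card _ (iUnion₂_subset fun i hi x hx => ?_)
          obtain ⟨c, hc, hxc⟩ := mem_iUnion₂.mp (hcover i hi hx)
          exact mem_iUnion₂.mpr ⟨c, Finset.mem_biUnion.mpr ⟨i, hi, hc⟩, hxc⟩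
      _ ≤ ∑ i ∈ I, (S i).card := Finset.card_biUnion_le
      _ = ∑ i ∈ I, coverNum (G i) r := Finset.sum_congr rfl hS
  · push Not at h
    obtain ⟨i, hi, hno⟩ := h
    rw [coverNum_eq_zero_of_not_exists]
    · exact Nat.zero_le _
    · rintro ⟨S, hS⟩
      exact hno S ((subset_biUnion_of_mem hi).trans hS)

lemma coverNum_image_le {Y : Type*} [PseudoMetricSpace Y] {f : X → Y} (hf : Isometry f)
    (h : ∃ S : Finset X, E ⊆ ⋃ x ∈ S, ball x r) : coverNum (f '' E) r ≤ coverNum E r := by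
  classical
  obtain ⟨S, hS, hcover⟩ := exists_card_eq_coverNum h
  calc coverNum (f '' E) r ≤ (S.image f).card := by
        refine coverNum_le_card _ (image_subset_iff.mpr fun x hx => ?_)
        obtain ⟨c, hc, hxc⟩ := mem_iUnion₂.mp (hcover hx)
        refine mem_iUnion₂.mpr ⟨f c, Finset.mem_image_of_mem f hc, ?_⟩
        rwa [mem_ball, hf.dist_eq]
    _ ≤ S.card := Finset.card_image_le
    _ = coverNum E r := hS

lemma coverNum_le_mul_card_pow {ι : Type*} [Fintype ι] [DecidableEq ι] {G : Set X}
    (f : X → ι → ℝ) (T : Finset ℝ) (hT : ∀ x ∈ G, ∀ j, f x j ∈ ⋃ c ∈ T, ball c r) {Q : ℕ}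
    (hQ : ∀ c : ι → ℝ, coverNum {x ∈ G | ∀ j, f x j ∈ ball (c j) r} r ≤ Q) :
    coverNum G r ≤ Q * T.card ^ Fintype.card ι := by
  have hG : G = ⋃ c ∈ Fintype.piFinset fun _ => T, {x ∈ G | ∀ j, f x j ∈ ball (c j) r} := by
    refine Subset.antisymm (fun x hx => ?_) (iUnion₂_subset fun c _ => sep_subset _ _)
    choose c hcT hc using fun j => mem_iUnion₂.mp (hT x hx j)
    exact mem_iUnion₂.mpr ⟨c, Fintype.mem_piFinset.mpr hcT, hx, hc⟩
  calc coverNum G r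
      = coverNum (⋃ c ∈ Fintype.piFinset fun _ => T, {x ∈ G | ∀ j, f x j ∈ ball (c j) r}) r := by
        rw [← hG]
    _ ≤ ∑ c ∈ Fintype.piFinset fun _ => T, Q :=
        (coverNum_biUnion_le _ _ _).trans (Finset.sum_le_sum fun c _ => hQ c)
    _ = Q * T.card ^ Fintype.card ι := by
        simp [mul_comm]

end CoverNum

section Proper

variable {X : Type*} [PseudoMetricSpace X] [ProperSpace X] {K : Set X} {r : ℝ}

lemma Bornology.IsBounded.exists_finset_subset_iUnion_ball (hK : Bornology.IsBounded K)
    (hr : 0 < r) :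
    ∃ S : Finset X, K ⊆ ⋃ x ∈ S, ball x r := by
  obtain ⟨t, -, ht, hKt⟩ := exists_finite_cover_balls_of_isCompact_closure hK.isCompact_closure hr
  exact ⟨ht.toFinset, by simpa using hKt⟩

lemma one_le_coverNum (hK : Bornology.IsBounded K) (hne : K.Nonempty) (hr : 0 < r) :
    1 ≤ coverNum K r := by
  obtain ⟨S, hS, hcover⟩ := exists_card_eq_coverNum (hK.exists_finset_subset_iUnion_ball hr)
  obtain ⟨x, hx⟩ := hne
  obtain ⟨c, hc, -⟩ := mem_iUnion₂.mp (hcover hx)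
  exact hS ▸ Finset.card_pos.mpr ⟨c, hc⟩

end Proper

section DistSet

variable {X : Type*} [PseudoMetricSpace X]

lemma distSet_mono {F G : Set X} (h : F ⊆ G) : distSet F ⊆ distSet G := by
  rintro s ⟨x, hx, y, hy, rfl⟩
  exact ⟨x, h hx, y, h hy, rfl⟩

lemma Bornology.IsBounded.distSet {K : Set X} (hK : Bornology.IsBounded K) :
    Bornology.IsBounded (distSet K) := by
  refine (isBounded_Icc 0 (diam K)).subset ?_
  rintro s ⟨x, hx, y, hy, rfl⟩
  exact ⟨dist_nonneg, dist_le_diam_of_mem hK hx hy⟩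

lemma Set.Nonempty.distSet {K : Set X} (hK : K.Nonempty) : (distSet K).Nonempty :=
  let ⟨x, hx⟩ := hK
  ⟨0, x, hx, x, hx, dist_self x⟩

lemma Isometry.distSet_image {Y : Type*} [PseudoMetricSpace Y] {f : X → Y} (hf : Isometry f)
    (K : Set X) : distSet (f '' K) = distSet K := by
  ext s
  simp only [_root_.distSet, mem_ofPred_eq, exists_mem_image, hf.dist_eq]

lemma distSet_empty : distSet (∅ : Set X) = ∅ := by
  simp [distSet]

end DistSet

lemma exists_coverNum_le_of_subset_ball {E : Type*} [NormedAddCommGroup E] [NormedSpace ℝ E]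
    [ProperSpace E] (Λ : ℝ) :
    ∃ Q : ℕ, ∀ (w : E) (r : ℝ), 0 < r → ∀ F ⊆ ball w (Λ * r), coverNum F r ≤ Q := by
  classical
  obtain ⟨t, -, ht, htcover⟩ := (isCompact_closedBall (0 : E) Λ).finite_cover_balls one_pos
  refine ⟨ht.toFinset.card, fun w r hr F hF => ?_⟩
  refine (coverNum_le_card (ht.toFinset.image fun c => w + r • c) fun x hx => ?_).trans
    Finset.card_image_le
  have hξ : r⁻¹ • (x - w) ∈ closedBall (0 : E) Λ := by
    have := hF hx
    rw [mem_ball, dist_eq_norm] at this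
    rw [mem_closedBall, dist_zero_right, norm_smul, norm_inv, Real.norm_of_nonneg hr.le,
      inv_mul_le_iff₀ hr, mul_comm]
    exact this.le
  obtain ⟨c, hc, hξc⟩ := mem_iUnion₂.mp (htcover hξ)
  refine mem_iUnion₂.mpr ⟨w + r • c, Finset.mem_image_of_mem _ (ht.mem_toFinset.mpr hc), ?_⟩
  have hx : x - (w + r • c) = r • (r⁻¹ • (x - w) - c) := by
    rw [smul_sub, smul_inv_smul₀ hr.ne']
    abel
  rw [mem_ball, dist_eq_norm, hx, norm_smul, Real.norm_of_nonneg hr.le]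
  rw [mem_ball, dist_eq_norm] at hξc
  nlinarith

lemma exists_coverNum_le_mul_card_pow_of_dist_le {E : Type*} [NormedAddCommGroup E]
    [NormedSpace ℝ E] [ProperSpace E] {ι : Type*} [Fintype ι] (y : ι → E) (L : ℝ) :
    ∃ Q : ℕ, ∀ {G : Set E},
      (∀ x ∈ G, ∀ x' ∈ G, dist x x' ≤ L * ∑ j, |dist x (y j) - dist x' (y j)|) →
      ∀ {r : ℝ}, 0 < r → ∀ T : Finset ℝ, (∀ x ∈ G, ∀ j, dist x (y j) ∈ ⋃ c ∈ T, ball c r) →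
      coverNum G r ≤ Q * T.card ^ Fintype.card ι := by
  classical
  obtain ⟨Q, hQ⟩ := exists_coverNum_le_of_subset_ball (E := E) (2 * |L| * Fintype.card ι + 1)
  refine ⟨Q, fun {G} hL {r} hr T hT => coverNum_le_mul_card_pow (fun x j => dist x (y j)) T hT
    fun c => ?_⟩
  rcases eq_empty_or_nonempty {x ∈ G | ∀ j, dist x (y j) ∈ ball (c j) r} with h | ⟨x₀, hx₀, hx₀c⟩
  · rw [h, coverNum_empty]
    exact Nat.zero_le _
  refine hQ x₀ r hr _ fun x ⟨hx, hxc⟩ => ?_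
  have hsum : ∑ j, |dist x (y j) - dist x₀ (y j)| ≤ Fintype.card ι * (2 * r) := by
    refine (Finset.sum_le_sum (g := fun _ => 2 * r) fun j _ => ?_).trans (by simp)
    rw [← Real.dist_eq]
    exact ((dist_triangle_right _ _ (c j)).trans_lt (add_lt_add (hxc j) (hx₀c j))).le.trans
      (by linarith)
  rw [mem_ball]
  calc dist x x₀ ≤ L * ∑ j, |dist x (y j) - dist x₀ (y j)| := hL x hx x₀ hx₀
    _ ≤ |L| * ∑ j, |dist x (y j) - dist x₀ (y j)| :=
        mul_le_mul_of_nonneg_right (le_abs_self L) (Finset.sum_nonneg fun _ _ => abs_nonneg _)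
    _ ≤ |L| * (Fintype.card ι * (2 * r)) := mul_le_mul_of_nonneg_left hsum (abs_nonneg L)
    _ < (2 * |L| * Fintype.card ι + 1) * r := by nlinarith

lemma abs_sq_sub_sq_le {a b R : ℝ} (ha : 0 ≤ a) (hb : 0 ≤ b) (haR : a ≤ R) (hbR : b ≤ R) :
    |a ^ 2 - b ^ 2| ≤ 2 * R * |a - b| := by
  rw [sq_sub_sq, abs_mul, abs_of_nonneg (add_nonneg ha hb)]
  exact mul_le_mul_of_nonneg_right (by linarith) (abs_nonneg _)

section DistanceCoordinates

variable {E : Type*} [NormedAddCommGroup E] [InnerProductSpace ℝ E] {ι : Type*} [Fintype ι]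

lemma norm_sq_sub_norm_sq_eq_inner_midpoint (x x' z : E) :
    ‖x - z‖ ^ 2 - ‖x' - z‖ ^ 2 = 2 * ⟪x - x', ((1 / 2 : ℝ) • x + (1 / 2 : ℝ) • x') - z⟫ := by
  rw [show x - x' = (x - z) - (x' - z) by abel,
    show ((1 / 2 : ℝ) • x + (1 / 2 : ℝ) • x') - z = (1 / 2 : ℝ) • ((x - z) + (x' - z)) by module,
    real_inner_smul_right, inner_sub_left, inner_add_right, inner_add_right,
    real_inner_self_eq_norm_sq, real_inner_self_eq_norm_sq, real_inner_comm (x - z)]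
  ring

lemma IsCompact.exists_pos_mul_norm_le_sum_abs_inner [FiniteDimensional ℝ E] {P : Set E}
    (hP : IsCompact P) (y : ι → E) (hy : ∀ m ∈ P, ∀ v, (∀ j, ⟪v, m - y j⟫ = 0) → v = 0) :
    ∃ ε > 0, ∀ m ∈ P, ∀ v, ε * ‖v‖ ≤ ∑ j, |⟪v, m - y j⟫| := by
  set g : E × E → ℝ := fun p => ∑ j, |⟪p.2, p.1 - y j⟫|
  have hpos : ∀ p ∈ P ×ˢ sphere (0 : E) 1, 0 < g p := by
    rintro ⟨m, v⟩ ⟨hm, hv⟩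
    refine (Finset.sum_nonneg fun j _ => abs_nonneg _).lt_of_ne fun h => ?_
    have hv0 := hy m hm v fun j => abs_eq_zero.mp
      ((Finset.sum_eq_zero_iff_of_nonneg fun j _ => abs_nonneg _).mp h.symm j (Finset.mem_univ j))
    simp [hv0] at hv
  obtain ⟨ε, hε, hmin⟩ := (hP.prod (isCompact_sphere 0 1)).exists_forall_le'
    (by fun_prop : Continuous g).continuousOn hpos
  refine ⟨ε, hε, fun m hm v => ?_⟩
  rcases eq_or_ne v 0 with rfl | hv
  · simp
  have hvn : 0 < ‖v‖ := norm_pos_iff.mpr hv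
  have := hmin (m, ‖v‖⁻¹ • v) ⟨hm, by simp [norm_smul, hvn.ne']⟩
  simp only [g, real_inner_smul_left, abs_mul, abs_inv, abs_norm, ← Finset.mul_sum] at this
  rwa [le_inv_mul_iff₀ hvn, mul_comm] at this

lemma Convex.exists_dist_le_mul_sum_abs_dist_sub [FiniteDimensional ℝ E] {P : Set E}
    (hPc : Convex ℝ P) (hP : IsCompact P) (y : ι → E)
    (hy : ∀ m ∈ P, ∀ v, (∀ j, ⟪v, m - y j⟫ = 0) → v = 0) :
    ∃ L : ℝ, ∀ x ∈ P, ∀ x' ∈ P, dist x x' ≤ L * ∑ j, |dist x (y j) - dist x' (y j)| := by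
  obtain ⟨ε, hε, hεP⟩ := hP.exists_pos_mul_norm_le_sum_abs_inner y hy
  obtain ⟨R, hR⟩ := Metric.isBounded_iff.mp (hP.isBounded.union (finite_range y).isBounded)
  refine ⟨R / ε, fun x hx x' hx' => ?_⟩
  have hm : (1 / 2 : ℝ) • x + (1 / 2 : ℝ) • x' ∈ P := hPc hx hx' (by norm_num) (by norm_num)
    (by norm_num)
  have hterm : ∀ j, |⟪x - x', ((1 / 2 : ℝ) • x + (1 / 2 : ℝ) • x') - y j⟫|
      ≤ R * |dist x (y j) - dist x' (y j)| := fun j => by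
    have hsq := abs_sq_sub_sq_le dist_nonneg dist_nonneg
      (hR (.inl hx) (.inr ⟨j, rfl⟩)) (hR (.inl hx') (.inr ⟨j, rfl⟩))
    rw [dist_eq_norm, dist_eq_norm, norm_sq_sub_norm_sq_eq_inner_midpoint, abs_mul,
      abs_two] at hsq
    rw [dist_eq_norm, dist_eq_norm]
    linarith
  rw [div_mul_eq_mul_div, le_div_iff₀ hε, mul_comm, dist_eq_norm, Finset.mul_sum]
  exact (hεP _ hm _).trans (Finset.sum_le_sum fun j _ => hterm j)

end DistanceCoordinates

section AffineBasis

variable {E : Type*} [NormedAddCommGroup E] [InnerProductSpace ℝ E] {ι : Type*} [Fintype ι]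

/-- `⟪v, ·⟫` takes the same value at `m` and at every `b j`, `j ≠ i`; as `m` has a nonzero weight
on `b i`, it takes that value at `b i` too, so it is constant. -/
lemma AffineBasis.eq_zero_of_inner_sub_eq_zero (b : AffineBasis ι ℝ E) {i : ι} {m : E}
    (hm : b.coord i m ≠ 0) {v : E} (hv : ∀ j : {j // j ≠ i}, ⟪v, m - b j⟫ = 0) : v = 0 := by
  have hcomb : ∀ x, ⟪v, x⟫ = ∑ l, b.coord l x * ⟪v, b l⟫ := fun x => by
    calc ⟪v, x⟫ = ⟪v, ∑ l, b.coord l x • b l⟫ := by rw [b.linear_combination_coord_eq_self]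
      _ = ∑ l, b.coord l x * ⟪v, b l⟫ := by simp only [inner_sum, real_inner_smul_right]
  have hne : ∀ l ≠ i, ⟪v, b l⟫ = ⟪v, m⟫ := fun l hl => by
    have := hv ⟨l, hl⟩
    rw [inner_sub_right] at this
    linarith
  have hi : ⟪v, b i⟫ = ⟪v, m⟫ := by
    have hsum : ∑ l, b.coord l m * (⟪v, b l⟫ - ⟪v, m⟫) = 0 := by
      simp only [mul_sub, Finset.sum_sub_distrib, ← Finset.sum_mul, b.sum_coord_apply_eq_one,
        ← hcomb, one_mul, sub_self]
    rw [Finset.sum_eq_single i (fun l _ hl => by rw [hne l hl, sub_self, mul_zero])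
      (by simp)] at hsum
    exact sub_eq_zero.mp ((mul_eq_zero.mp hsum).resolve_left hm)
  have hconst : ∀ x, ⟪v, x⟫ = ⟪v, m⟫ := fun x => by
    have hb : ∀ l, ⟪v, b l⟫ = ⟪v, m⟫ := fun l => by
      by_cases hl : l = i
      · exact hl ▸ hi
      · exact hne l hl
    simp only [hcomb x, hb, ← Finset.sum_mul, b.sum_coord_apply_eq_one, one_mul]
  rw [← inner_self_eq_zero (𝕜 := ℝ), hconst, ← hconst 0, inner_zero_right]

lemma AffineBasis.exists_coverNum_le_mul_coverNum_distSet_pow [FiniteDimensional ℝ E]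
    (b : AffineBasis ι ℝ E) {K : Set E} (hbK : ∀ i, b i ∈ K) (hK : Bornology.IsBounded K) :
    ∃ C : ℕ, ∀ r > 0, coverNum K r ≤ C * coverNum (distSet K) r ^ (Fintype.card ι - 1) := by
  classical
  obtain ⟨R, hR⟩ := hK.subset_closedBall 0
  set P : ι → Set E := fun i => closedBall 0 R ∩ {x | (Fintype.card ι : ℝ)⁻¹ ≤ b.coord i x}
  have hPconv : ∀ i, Convex ℝ (P i) := fun i =>
    (convex_closedBall 0 R).inter ((convex_Ici _).affine_preimage (b.coord i))
  have hPcpt : ∀ i, IsCompact (P i) := fun i => (isCompact_closedBall 0 R).inter_right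
    (isClosed_le continuous_const (b.coord i).continuous_of_finiteDimensional)
  have hPnd : ∀ i, ∀ m ∈ P i, ∀ v, (∀ j : {j // j ≠ i}, ⟪v, m - b j⟫ = 0) → v = 0 :=
    fun i m hm v hv => b.eq_zero_of_inner_sub_eq_zero
      (lt_of_lt_of_le (by have := b.nonempty; positivity) hm.2).ne' hv
  choose L hL using fun i =>
    (hPconv i).exists_dist_le_mul_sum_abs_dist_sub (hPcpt i) (fun j : {j // j ≠ i} => b j) (hPnd i)
  choose Q hQ using fun i =>
    exists_coverNum_le_mul_card_pow_of_dist_le (fun j : {j // j ≠ i} => b j) (L i)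
  refine ⟨∑ i, Q i, fun r hr => ?_⟩
  obtain ⟨T, hT, hTcover⟩ :=
    exists_card_eq_coverNum (hK.distSet.exists_finset_subset_iUnion_ball hr)
  have hKP : K = ⋃ i ∈ Finset.univ, K ∩ P i := by
    refine Subset.antisymm (fun x hx => ?_) (iUnion₂_subset fun i _ => inter_subset_left)
    have hsum : ∑ _ : ι, (Fintype.card ι : ℝ)⁻¹ ≤ ∑ i, b.coord i x := by
      have := b.nonempty
      simp [b.sum_coord_apply_eq_one]
    obtain ⟨i, -, hi⟩ := Finset.exists_le_of_sum_le (by have := b.nonempty; simp) hsum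
    exact mem_iUnion₂.mpr ⟨i, Finset.mem_univ i, hx, hR hx, hi⟩
  calc coverNum K r = coverNum (⋃ i ∈ Finset.univ, K ∩ P i) r := by rw [← hKP]
    _ ≤ ∑ i, coverNum (K ∩ P i) r := coverNum_biUnion_le _ _ _
    _ ≤ ∑ i, Q i * T.card ^ Fintype.card {j // j ≠ i} := Finset.sum_le_sum fun i _ =>
        hQ i (fun x hx x' hx' => hL i x hx.2 x' hx'.2) hr T
          fun x hx j => hTcover ⟨x, hx.1, b j, hbK j, rfl⟩
    _ = (∑ i, Q i) * coverNum (distSet K) r ^ (Fintype.card ι - 1) := by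
        simp [hT, Finset.sum_mul]

end AffineBasis

lemma exists_coverNum_le_mul_coverNum_distSet_pow {E : Type*} [NormedAddCommGroup E]
    [InnerProductSpace ℝ E] [FiniteDimensional ℝ E] {K : Set E} (hK : Bornology.IsBounded K)
    (hne : K.Nonempty) :
    ∃ C : ℕ, ∀ r > 0, coverNum K r ≤ C * coverNum (distSet K) r ^ Module.finrank ℝ E := by
  obtain ⟨y, hy⟩ := hne
  set S : Set E := (· - y) '' K
  set V := Submodule.span ℝ S
  set K' : Set V := (↑) ⁻¹' S
  set f : V → E := fun v => ↑v + y
  have hf : Isometry f := Isometry.of_dist_eq fun v w => by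
    simp only [f, dist_add_right]
    rfl
  have hfK : f '' K' = K := by
    ext x
    constructor
    · rintro ⟨v, ⟨x', hx', hv⟩, rfl⟩
      simpa [f, ← hv] using hx'
    · intro hx
      exact ⟨⟨x - y, Submodule.subset_span ⟨x, hx, rfl⟩⟩, ⟨x, hx, rfl⟩, sub_add_cancel x y⟩
  have hK' : Bornology.IsBounded K' := by
    simpa [← hfK, hf.injective.preimage_image] using hf.antilipschitz.isBounded_preimage hK
  have h0 : (0 : V) ∈ K' := ⟨y, hy, sub_self y⟩
  have hspan : affineSpan ℝ K' = ⊤ := by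
    rw [AffineSubspace.affineSpan_eq_top_iff_vectorSpan_eq_top_of_nonempty _ _ _ ⟨0, h0⟩,
      vectorSpan_eq_span_vsub_set_right ℝ h0]
    simp only [vsub_eq_sub, sub_zero, image_id']
    exact Submodule.span_span_coe_preimage
  obtain ⟨s, hsK', b, hb⟩ := AffineBasis.exists_affine_subbasis hspan
  have := b.finite
  let _ := Fintype.ofFinite s
  obtain ⟨C, hC⟩ := b.exists_coverNum_le_mul_coverNum_distSet_pow (fun i => hb ▸ hsK' i.2) hK'
  refine ⟨C, fun r hr => ?_⟩
  have hdim : Fintype.card s - 1 ≤ Module.finrank ℝ E := by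
    rw [b.card_eq_finrank_add_one, Nat.add_sub_cancel]
    exact Submodule.finrank_le V
  calc coverNum K r = coverNum (f '' K') r := by rw [hfK]
    _ ≤ coverNum K' r := coverNum_image_le hf (hK'.exists_finset_subset_iUnion_ball hr)
    _ ≤ C * coverNum (distSet K) r ^ (Fintype.card s - 1) := by
        rw [← hfK, hf.distSet_image]
        exact hC r hr
    _ ≤ C * coverNum (distSet K) r ^ Module.finrank ℝ E := Nat.mul_le_mul_left _
        (Nat.pow_le_pow_right (one_le_coverNum hK.distSet (nonempty_of_mem hy).distSet hr) hdim)

section BoxDimension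

open Real

variable {X : Type*} [PseudoMetricSpace X]

lemma log_coverNum_div_neg_log_nonneg (A : Set X) {r : ℝ} (hr₀ : 0 < r) (hr₁ : r < 1) :
    0 ≤ log (coverNum A r) / -log r :=
  div_nonneg (log_natCast_nonneg _) (neg_nonneg.mpr (log_nonpos hr₀.le hr₁.le))

lemma isCoboundedUnder_log_coverNum_div_neg_log (A : Set X) :
    IsCoboundedUnder (· ≤ ·) (𝓝[>] 0) fun r => log (coverNum A r) / -log r :=
  isCoboundedUnder_le_of_eventually_le _ <| by
    filter_upwards [Ioo_mem_nhdsGT one_pos] with r hr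
    exact log_coverNum_div_neg_log_nonneg A hr.1 hr.2

lemma eventually_div_neg_log_lt (c : ℝ) {ε : ℝ} (hε : 0 < ε) :
    ∀ᶠ r in 𝓝[>] (0 : ℝ), c / -log r < ε :=
  (tendsto_const_nhds.div_atTop (tendsto_neg_atBot_atTop.comp tendsto_log_nhdsGT_zero)).eventually
    (eventually_lt_nhds hε)

lemma upperBoxDimBdd_empty : upperBoxDimBdd (∅ : Set X) = 0 := by
  simp [upperBoxDimBdd, coverNum_empty]

lemma upperBoxDimBdd_le_mul_of_coverNum_le {Y : Type*} [PseudoMetricSpace Y] {A : Set X}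
    {B : Set Y} {n C : ℕ} (hA : ∀ᶠ r in 𝓝[>] 0, 1 ≤ coverNum A r)
    (hB : IsBoundedUnder (· ≤ ·) (𝓝[>] 0) fun r => log (coverNum B r) / -log r)
    (hAB : ∀ᶠ r in 𝓝[>] 0, coverNum A r ≤ C * coverNum B r ^ n) :
    upperBoxDimBdd A ≤ n * upperBoxDimBdd B := by
  refine le_of_forall_pos_le_add fun ε hε => ?_
  have hεn : 0 < ε / (n + 1) := by positivity
  refine limsup_le_of_le (isCoboundedUnder_log_coverNum_div_neg_log A) ?_
  filter_upwards [hA, hAB, eventually_lt_of_limsup_lt (lt_add_of_pos_right _ hεn) hB,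
    eventually_div_neg_log_lt (log C) hεn, Ioo_mem_nhdsGT one_pos]
    with r hA hAB hB hC ⟨hr₀, hr₁⟩
  have hlog : 0 < -log r := neg_pos.mpr (log_neg hr₀ hr₁)
  have hCB : (C * coverNum B r ^ n : ℝ) ≠ 0 := by
    have : (1 : ℝ) ≤ C * coverNum B r ^ n := by exact_mod_cast hA.trans hAB
    exact (one_pos.trans_le this).ne'
  have hlogA : log (coverNum A r) ≤ log C + n * log (coverNum B r) := by
    rw [← log_pow, ← log_mul (left_ne_zero_of_mul hCB) (right_ne_zero_of_mul hCB)]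
    exact log_le_log (by exact_mod_cast hA) (by exact_mod_cast hAB)
  calc log (coverNum A r) / -log r ≤ (log C + n * log (coverNum B r)) / -log r :=
        div_le_div_of_nonneg_right hlogA hlog.le
    _ = log C / -log r + n * (log (coverNum B r) / -log r) := by ring
    _ ≤ ε / (n + 1) + n * (upperBoxDimBdd B + ε / (n + 1)) :=
        add_le_add hC.le (mul_le_mul_of_nonneg_left hB.le n.cast_nonneg)
    _ = n * upperBoxDimBdd B + ε := by field_simp; ring

lemma coverNum_le_of_subset_Icc {G : Set ℝ} {a b r : ℝ} (hr : 0 < r) (h : G ⊆ Icc a b) :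
    coverNum G r ≤ ⌊(b - a) / r⌋₊ + 1 := by
  classical
  refine (coverNum_le_card
    ((Finset.range (⌊(b - a) / r⌋₊ + 1)).image fun j : ℕ => a + (j : ℝ) * r) fun x hx => ?_).trans
    (Finset.card_image_le.trans (Finset.card_range _).le)
  obtain ⟨hax, hxb⟩ := h hx
  have hj := Nat.floor_le (div_nonneg (sub_nonneg.mpr hax) hr.le)
  have hj' := Nat.lt_floor_add_one ((x - a) / r)
  rw [le_div_iff₀ hr] at hj
  rw [div_lt_iff₀ hr] at hj'
  refine mem_iUnion₂.mpr ⟨a + ⌊(x - a) / r⌋₊ * r, Finset.mem_image_of_mem _ ?_, ?_⟩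
  · exact Finset.mem_range.mpr (Nat.lt_succ_of_le (Nat.floor_mono (by gcongr)))
  · rw [mem_ball, Real.dist_eq, abs_lt]
    constructor <;> linarith

lemma Bornology.IsBounded.eventually_log_coverNum_div_neg_log_le_two {G : Set ℝ}
    (hG : Bornology.IsBounded G) : ∀ᶠ r in 𝓝[>] 0, log (coverNum G r) / -log r ≤ 2 := by
  obtain ⟨R, hR, hGR⟩ := hG.subset_closedBall_lt 0 0
  rw [closedBall_eq_Icc, zero_sub, zero_add] at hGR
  filter_upwards [eventually_div_neg_log_lt (log (2 * R + 1)) one_pos, Ioo_mem_nhdsGT one_pos]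
    with r hsmall ⟨hr₀, hr₁⟩
  have hlog : 0 < -log r := neg_pos.mpr (log_neg hr₀ hr₁)
  rcases Nat.eq_zero_or_pos (coverNum G r) with h | h
  · simp [h]
  have hN : (coverNum G r : ℝ) ≤ (2 * R + 1) / r := by
    have hcov : (coverNum G r : ℝ) ≤ ⌊(R - -R) / r⌋₊ + 1 := by
      exact_mod_cast coverNum_le_of_subset_Icc hr₀ hGR
    have hfl : (⌊(R - -R) / r⌋₊ : ℝ) ≤ (R - -R) / r :=
      Nat.floor_le (div_nonneg (by linarith) hr₀.le)
    rw [le_div_iff₀ hr₀]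
    calc (coverNum G r : ℝ) * r ≤ ((R - -R) / r + 1) * r := by gcongr; linarith
      _ = 2 * R + r := by field_simp; ring
      _ ≤ 2 * R + 1 := by linarith
  have hlogN : log (coverNum G r) ≤ log (2 * R + 1) + -log r := by
    rw [← sub_eq_add_neg, ← log_div (by linarith) hr₀.ne']
    exact log_le_log (by exact_mod_cast h) hN
  rw [div_le_iff₀ hlog]
  rw [div_lt_iff₀ hlog] at hsmall
  linarith

lemma upperBoxDimBdd_le_two {G : Set ℝ} (hG : Bornology.IsBounded G) : upperBoxDimBdd G ≤ 2 :=
  limsup_le_of_le (isCoboundedUnder_log_coverNum_div_neg_log G)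
    hG.eventually_log_coverNum_div_neg_log_le_two

lemma upperBoxDimBdd_le_finrank_mul {E : Type*} [NormedAddCommGroup E] [InnerProductSpace ℝ E]
    [FiniteDimensional ℝ E] {K : Set E} (hK : Bornology.IsBounded K) :
    upperBoxDimBdd K ≤ Module.finrank ℝ E * upperBoxDimBdd (distSet K) := by
  rcases K.eq_empty_or_nonempty with rfl | hne
  · simp [distSet_empty, upperBoxDimBdd_empty]
  obtain ⟨C, hC⟩ := exists_coverNum_le_mul_coverNum_distSet_pow hK hne
  refine upperBoxDimBdd_le_mul_of_coverNum_le (C := C) ?_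
    (isBoundedUnder_of_eventually_le hK.distSet.eventually_log_coverNum_div_neg_log_le_two) ?_
  · filter_upwards [self_mem_nhdsWithin] with r hr using one_le_coverNum hK hne hr
  · filter_upwards [self_mem_nhdsWithin] with r hr using hC r hr

end BoxDimension

/-- For any `F ⊆ ℝ^d`, the upper box dimension of the distance set satisfies
`dim̄_B D(F) ≥ dim̄_B F / d`. -/
theorem stmt8 {d : ℕ} (F : Set (EuclideanSpace ℝ (Fin d))) :
    upperBoxDim F / (d : ℝ) ≤ upperBoxDim (distSet F) := by
  have hbdd : BddAbove (range fun K : {K : Set ℝ // K ⊆ distSet F ∧ Bornology.IsBounded K} =>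
      upperBoxDimBdd K.1) :=
    ⟨2, forall_mem_range.mpr fun K => upperBoxDimBdd_le_two K.2.2⟩
  have hle : ∀ K ⊆ distSet F, Bornology.IsBounded K →
      upperBoxDimBdd K ≤ upperBoxDim (distSet F) := fun K hKF hK => le_ciSup hbdd ⟨K, hKF, hK⟩
  have hnonneg : 0 ≤ upperBoxDim (distSet F) :=
    upperBoxDimBdd_empty (X := ℝ) ▸ hle ∅ (empty_subset _) Bornology.isBounded_empty
  refine div_le_of_le_mul₀ d.cast_nonneg hnonneg
    (Real.iSup_le (fun ⟨K, hKF, hK⟩ => ?_) (mul_nonneg hnonneg d.cast_nonneg))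
  calc upperBoxDimBdd K ≤ d * upperBoxDimBdd (distSet K) := by
        simpa using upperBoxDimBdd_le_finrank_mul hK
    _ ≤ upperBoxDim (distSet F) * d := by
        rw [mul_comm]
        exact mul_le_mul_of_nonneg_right (hle _ (distSet_mono hKF) hK.distSet) d.cast_nonneg
end

section
/- Let F ⊆ ℝ be a closed set with lower dimension bounded below by s > 0. Then the Hausdorff dimension of the n-fold iterated sumset nF tends to 1 as n → ∞. -/
open Set Metric Filter Pointwise

/-!
Positive lower dimension makes `F` uniformly perfect: every ball `B(x, R)` with `x ∈ F` and
`R < diam F` contains two points of `F` at least `γ R` apart. Sending each of `n` summands to the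
lower or the upper of two such points, and choosing how many go up, gives `n + 1` sums that are
`γ R` apart. Iterating at the scales `R ρ ^ k` with `ρ = γ / (8 (n + 1))` builds a Cantor set in
`nF` whose `n + 1` pieces at level `k` stay `γ R ρ ^ k / 2` apart. Reading its points as base
`n + 1` expansions is a Hölder map onto `[0, 1]` with exponent `log (n + 1) / log ρ⁻¹`, so this
ratio, which tends to `1`, bounds `dim_H (nF)` from below.
-/

open Topology
open scoped NNReal ENNReal

section LowerDimension

variable {X : Type*} [PseudoMetricSpace X]

def UniformlyPerfectWith (γ : ℝ) (F : Set X) : Prop :=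
  ∀ x ∈ F, ∀ R, 0 < R → R < diam F → ∃ y ∈ F, γ * R ≤ dist y x ∧ dist y x < R

lemma coverNum_le_one_of_subset_ball {E : Set X} {x : X} {r : ℝ} (h : E ⊆ ball x r) :
    coverNum E r ≤ 1 :=
  Nat.sInf_le ⟨{x}, Finset.card_singleton x, by simpa using h⟩

lemma diam_pos_of_lowerDim_pos {F : Set X} (h : 0 < lowerDim F) : 0 < diam F := by
  by_contra! hD
  -- for a set of nonpositive diameter every exponent satisfies the lower-dimension bound
  have hunbdd : ¬ BddAbove {s : ℝ | 0 ≤ s ∧ ∃ C > 0, ∀ x ∈ F, ∀ R, 0 < R → R < diam F →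
      ∀ r, 0 < r → r < R → C * (R / r) ^ s ≤ (coverNum (ball x R ∩ F) r : ℝ)} := by
    refine not_bddAbove_iff.2 fun s => ⟨max s 0 + 1, ⟨by positivity, 1, one_pos,
      fun x _ R hR hRD => absurd (hR.trans hRD) hD.not_gt⟩, by linarith [le_max_left s 0]⟩
  rw [lowerDim, Real.sSup_of_not_bddAbove hunbdd] at h
  exact h.false

lemma exists_uniformlyPerfectWith_of_lowerDim_pos {F : Set X} (h : 0 < lowerDim F) :
    ∃ γ, 0 < γ ∧ γ < 1 ∧ UniformlyPerfectWith γ F := by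
  have hne : {s : ℝ | 0 ≤ s ∧ ∃ C > 0, ∀ x ∈ F, ∀ R, 0 < R → R < diam F →
      ∀ r, 0 < r → r < R → C * (R / r) ^ s ≤ (coverNum (ball x R ∩ F) r : ℝ)}.Nonempty :=
    Set.nonempty_iff_ne_empty.2 fun h' => by simp [lowerDim, h'] at h
  obtain ⟨t, ⟨-, C, hC, hbound⟩, ht⟩ := exists_lt_of_lt_csSup hne h
  obtain ⟨L, hL2, hL1⟩ := (((tendsto_rpow_atTop ht).const_mul_atTop hC).eventually_ge_atTop
    2 |>.and (eventually_gt_atTop 1)).exists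
  refine ⟨L⁻¹, by positivity, inv_lt_one_of_one_lt₀ hL1, fun x hx R hR hRD => ?_⟩
  have hr : 0 < L⁻¹ * R := by positivity
  have hrR : L⁻¹ * R < R := mul_lt_of_lt_one_left hR (inv_lt_one_of_one_lt₀ hL1)
  have hcover : 2 ≤ coverNum (ball x R ∩ F) (L⁻¹ * R) := by
    have := hbound x hx R hR hRD _ hr hrR
    rw [show R / (L⁻¹ * R) = L by field_simp] at this
    exact_mod_cast hL2.trans this
  by_contra! hclose
  have : ball x R ∩ F ⊆ ball x (L⁻¹ * R) := fun y ⟨hyR, hy⟩ => by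
    by_contra hyr
    exact (hclose y hy (not_lt.1 hyr)).not_gt hyR
  have := coverNum_le_one_of_subset_ball this
  omega

end LowerDimension

lemma UniformlyPerfectWith.exists_gap {F : Set ℝ} {γ : ℝ} (hF : UniformlyPerfectWith γ F)
    {x R : ℝ} (hx : x ∈ F) (hR : 0 < R) (hRD : R < diam F) :
    ∃ p ∈ F, ∃ q ∈ F, |p - x| < R ∧ |q - x| < R ∧ γ * R ≤ q - p := by
  obtain ⟨y, hy, hγ, hyR⟩ := hF x hx R hR hRD
  rw [Real.dist_eq] at hγ hyR
  rcases le_total x y with hxy | hyx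
  · exact ⟨x, hx, y, hy, by simpa, hyR, by rwa [abs_of_nonneg (by linarith)] at hγ⟩
  · exact ⟨y, hy, x, hx, hyR, by simpa, by rw [abs_of_nonpos (by linarith)] at hγ; linarith⟩

lemma le_dist_sum_ite_sum_ite {n : ℕ} {p q : Fin n → ℝ} {δ : ℝ} (hδ : 0 ≤ δ)
    (hpq : ∀ i, δ ≤ q i - p i) {j j' : Fin (n + 1)} (hne : j ≠ j') :
    δ ≤ dist (∑ i, if i.castSucc < j then q i else p i)
      (∑ i, if i.castSucc < j' then q i else p i) := by
  wlog hj : j < j' generalizing j j'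
  · rw [dist_comm]
    exact this hne.symm (hne.symm.lt_of_le (not_lt.1 hj))
  rw [dist_comm, Real.dist_eq, ← Finset.sum_sub_distrib]
  set i₀ := j.castPred (Fin.ne_last_of_lt hj)
  have hterm : ∀ i : Fin n, 0 ≤ (if i.castSucc < j' then q i else p i) -
      (if i.castSucc < j then q i else p i) := fun i => by
    split_ifs with h₁ h₂ h₂
    · simp
    · linarith [hpq i]
    · exact absurd (h₂.trans hj) h₁
    · simp
  calc δ ≤ _ := by simpa [i₀, hj] using hpq i₀
    _ ≤ _ := Finset.single_le_sum (fun i _ => hterm i) (Finset.mem_univ i₀)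
    _ ≤ _ := le_abs_self _

lemma lipschitzWith_sum (n : ℕ) : LipschitzWith n (fun v : Fin n → ℝ => ∑ i, v i) := by
  refine LipschitzWith.of_dist_le_mul fun v w => ?_
  calc dist (∑ i, v i) (∑ i, w i) ≤ ∑ _i : Fin n, dist v w :=
        dist_sum_sum_le_of_le _ fun i _ => dist_le_pi_dist v w i
    _ = n * dist v w := by simp

section CantorScheme

variable {Y Z : Type*} {b : ℕ} {m : ℕ → Fin b → Y → Y} {y₀ : Y} {K : Set Y}

variable (m y₀) in
def cantorBranch (ω : ℕ → Fin b) : ℕ → Y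
  | 0 => y₀
  | k + 1 => m k (ω k) (cantorBranch ω k)

lemma cantorBranch_mem (hm : ∀ k j, MapsTo (m k j) K K) (hy₀ : y₀ ∈ K) (ω : ℕ → Fin b) :
    ∀ k, cantorBranch m y₀ ω k ∈ K
  | 0 => hy₀
  | k + 1 => hm k (ω k) (cantorBranch_mem hm hy₀ ω k)

lemma cantorBranch_congr {ω ω' : ℕ → Fin b} :
    ∀ {k}, (∀ i < k, ω i = ω' i) → cantorBranch m y₀ ω k = cantorBranch m y₀ ω' k
  | 0, _ => rfl
  | k + 1, h => by
    simp only [cantorBranch, h k k.lt_succ_self,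
      cantorBranch_congr fun i hi => h i (hi.trans k.lt_succ_self)]

variable [PseudoMetricSpace Y] [PseudoMetricSpace Z] {a ρ : ℝ}

lemma dist_cantorBranch_succ_le (hm : ∀ k j, MapsTo (m k j) K K) (hy₀ : y₀ ∈ K)
    (hstep : ∀ k j, ∀ y ∈ K, dist (m k j y) y ≤ a * ρ ^ k) (ω : ℕ → Fin b) (k : ℕ) :
    dist (cantorBranch m y₀ ω k) (cantorBranch m y₀ ω (k + 1)) ≤ a * ρ ^ k := by
  rw [dist_comm]
  exact hstep k (ω k) _ (cantorBranch_mem hm hy₀ ω k)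

lemma exists_tendsto_cantorBranch [CompleteSpace Y] (hK : IsClosed K)
    (hm : ∀ k j, MapsTo (m k j) K K) (hy₀ : y₀ ∈ K)
    (hstep : ∀ k j, ∀ y ∈ K, dist (m k j y) y ≤ a * ρ ^ k) (hρ : ρ < 1) :
    ∃ P : (ℕ → Fin b) → Y, ∀ ω, P ω ∈ K ∧ Tendsto (cantorBranch m y₀ ω) atTop (𝓝 (P ω)) := by
  choose P hP using fun ω => cauchySeq_tendsto_of_complete
    (cauchySeq_of_le_geometric ρ a hρ (dist_cantorBranch_succ_le hm hy₀ hstep ω))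
  exact ⟨P, fun ω => ⟨hK.mem_of_tendsto (hP ω) (.of_forall (cantorBranch_mem hm hy₀ ω)), hP ω⟩⟩

lemma le_dist_of_tendsto_cantorBranch {g : Y → Z} {L : ℝ≥0} {δ : ℝ} (hg : LipschitzWith L g)
    (hm : ∀ k j, MapsTo (m k j) K K) (hy₀ : y₀ ∈ K)
    (hstep : ∀ k j, ∀ y ∈ K, dist (m k j y) y ≤ a * ρ ^ k) (hρ0 : 0 ≤ ρ) (hρ : ρ < 1)
    (hsep : ∀ k, ∀ y ∈ K, ∀ j j', j ≠ j' → δ * ρ ^ k ≤ dist (g (m k j y)) (g (m k j' y)))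
    (hsmall : 4 * L * a * ρ ≤ δ * (1 - ρ)) {P : (ℕ → Fin b) → Y}
    (hP : ∀ ω, Tendsto (cantorBranch m y₀ ω) atTop (𝓝 (P ω))) {ω ω' : ℕ → Fin b}
    (hne : ω ≠ ω') :
    δ / 2 * ρ ^ PiNat.firstDiff ω ω' ≤ dist (g (P ω)) (g (P ω')) := by
  set k := PiNat.firstDiff ω ω'
  have hbranch : cantorBranch m y₀ ω k = cantorBranch m y₀ ω' k :=
    cantorBranch_congr fun i hi => PiNat.apply_eq_of_lt_firstDiff hi
  have htail : ∀ ω, dist (g (cantorBranch m y₀ ω (k + 1))) (g (P ω)) ≤ δ / 4 * ρ ^ k := by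
    intro ω
    have h := dist_le_of_le_geometric_of_tendsto ρ a hρ
      (dist_cantorBranch_succ_le hm hy₀ hstep ω) (hP ω) (k + 1)
    calc dist (g (cantorBranch m y₀ ω (k + 1))) (g (P ω))
        ≤ L * (a * ρ ^ (k + 1) / (1 - ρ)) := hg.dist_le_mul_of_le h
      _ = 4 * L * a * ρ / (1 - ρ) * (ρ ^ k / 4) := by ring
      _ ≤ δ * (1 - ρ) / (1 - ρ) * (ρ ^ k / 4) := by gcongr
      _ = δ / 4 * ρ ^ k := by field_simp [(sub_pos.2 hρ).ne']
  set y := cantorBranch m y₀ ω k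
  have hgap : δ * ρ ^ k ≤ dist (g (m k (ω k) y)) (g (m k (ω' k) y)) :=
    hsep k y (cantorBranch_mem hm hy₀ ω k) _ _ (PiNat.apply_firstDiff_ne hne)
  have h₁ : dist (g (m k (ω k) y)) (g (P ω)) ≤ δ / 4 * ρ ^ k := htail ω
  have h₂ : dist (g (m k (ω' k) y)) (g (P ω')) ≤ δ / 4 * ρ ^ k := by
    rw [hbranch]; exact htail ω'
  linarith [dist_triangle4 (g (m k (ω k) y)) (g (P ω)) (g (P ω')) (g (m k (ω' k) y)),
    dist_comm (g (P ω')) (g (m k (ω' k) y))]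

end CantorScheme

lemma holderOnWith_of_dist_le {X Y : Type*} [PseudoMetricSpace X] [PseudoMetricSpace Y]
    {C r : ℝ≥0} {f : X → Y} {s : Set X}
    (h : ∀ x ∈ s, ∀ y ∈ s, dist (f x) (f y) ≤ C * dist x y ^ (r : ℝ)) :
    HolderOnWith C r f s := by
  intro x hx y hy
  rw [edist_nndist, edist_nndist, ← ENNReal.coe_rpow_of_nonneg _ (NNReal.coe_nonneg r),
    ← ENNReal.coe_mul, ENNReal.coe_le_coe, ← NNReal.coe_le_coe]
  push_cast
  exact h x hx y hy

lemma rpow_log_div_log_inv {b ρ : ℝ} (hb : 0 < b) (hρ0 : 0 < ρ) (hρ1 : ρ ≠ 1) :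
    ρ ^ (Real.log b / Real.log ρ⁻¹) = b⁻¹ := by
  have hlogρ : Real.log ρ ≠ 0 := Real.log_ne_zero_of_pos_of_ne_one hρ0 hρ1
  rw [Real.rpow_def_of_pos hρ0, Real.log_inv, mul_div_left_comm, div_neg, div_self hlogρ,
    mul_neg_one, Real.exp_neg, Real.exp_log hb]

section Separated

variable {X : Type*} [PseudoMetricSpace X] {b : ℕ} {Φ : (ℕ → Fin b) → X} {c ρ : ℝ}

lemma injective_of_separated (hc : 0 < c) (hρ0 : 0 < ρ)
    (hΦ : ∀ ω ω', ω ≠ ω' → c * ρ ^ PiNat.firstDiff ω ω' ≤ dist (Φ ω) (Φ ω')) :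
    Function.Injective Φ := fun ω ω' h => by
  by_contra hne
  have := hΦ ω ω' hne
  rw [h, dist_self] at this
  exact (by positivity : 0 < c * ρ ^ PiNat.firstDiff ω ω').not_ge this

lemma holderOnWith_of_separated {f : X → ℝ} (hf : ∀ ω, f (Φ ω) = Real.ofDigits ω) (hc : 0 < c)
    (hρ0 : 0 < ρ) (hρ1 : ρ < 1)
    (hΦ : ∀ ω ω', ω ≠ ω' → c * ρ ^ PiNat.firstDiff ω ω' ≤ dist (Φ ω) (Φ ω')) :
    HolderOnWith (c ^ (-(Real.log b / Real.log ρ⁻¹))).toNNReal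
      (Real.log b / Real.log ρ⁻¹).toNNReal f (range Φ) := by
  refine holderOnWith_of_dist_le ?_
  rintro _ ⟨ω, rfl⟩ _ ⟨ω', rfl⟩
  set α := Real.log b / Real.log ρ⁻¹
  have hb : (1 : ℝ) ≤ b := by exact_mod_cast Fin.pos (ω 0)
  have hα : 0 ≤ α :=
    div_nonneg (Real.log_nonneg hb) (Real.log_nonneg ((one_le_inv₀ hρ0).2 hρ1.le))
  rw [Real.coe_toNNReal _ (by positivity), Real.coe_toNNReal _ hα]
  rcases eq_or_ne ω ω' with rfl | hne
  · simp only [dist_self]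
    positivity
  set k := PiNat.firstDiff ω ω'
  calc dist (f (Φ ω)) (f (Φ ω')) = |Real.ofDigits ω - Real.ofDigits ω'| := by
        rw [hf, hf, Real.dist_eq]
    _ ≤ ((b : ℝ) ^ k)⁻¹ :=
        Real.abs_ofDigits_sub_ofDigits_le fun i hi => PiNat.apply_eq_of_lt_firstDiff hi
    _ = c ^ (-α) * (c * ρ ^ k) ^ α := by
        rw [Real.mul_rpow hc.le (by positivity), ← mul_assoc, ← Real.rpow_add hc, neg_add_cancel,
          Real.rpow_zero, one_mul, ← Real.rpow_pow_comm hρ0.le,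
          rpow_log_div_log_inv (by positivity) hρ0 hρ1.ne, inv_pow]
    _ ≤ c ^ (-α) * dist (Φ ω) (Φ ω') ^ α := by gcongr; exact hΦ ω ω' hne

end Separated

theorem le_dimH_range_of_separated {X : Type*} [MetricSpace X] {b : ℕ} {Φ : (ℕ → Fin b) → X}
    {c ρ : ℝ} (hb : 1 < b) (hc : 0 < c) (hρ0 : 0 < ρ) (hρ1 : ρ < 1)
    (hΦ : ∀ ω ω', ω ≠ ω' → c * ρ ^ PiNat.firstDiff ω ω' ≤ dist (Φ ω) (Φ ω')) :
    ENNReal.ofReal (Real.log b / Real.log ρ⁻¹) ≤ dimH (range Φ) := by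
  have hα : 0 < Real.log b / Real.log ρ⁻¹ :=
    div_pos (Real.log_pos (by exact_mod_cast hb)) (Real.log_pos ((one_lt_inv₀ hρ0).2 hρ1))
  have : Nonempty (Fin b) := ⟨⟨0, by omega⟩⟩
  set f := Real.ofDigits ∘ Function.invFun Φ
  have hf : ∀ ω, f (Φ ω) = Real.ofDigits ω := fun ω => by
    simp [f, Function.leftInverse_invFun (injective_of_separated hc hρ0 hΦ) ω]
  have hcover : (1 : ℝ≥0∞) ≤ dimH (f '' range Φ) := by
    rw [← range_comp, show f ∘ Φ = Real.ofDigits from funext hf]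
    calc (1 : ℝ≥0∞) = dimH (Icc (0 : ℝ) 1) := by
          rw [Real.dimH_of_nonempty_interior (by simp), Module.finrank_self, Nat.cast_one]
      _ ≤ dimH (range Real.ofDigits) := dimH_mono fun y hy => by
          simpa using Real.ofDigits_SurjOn hb hy
  have := hcover.trans
    ((holderOnWith_of_separated hf hc hρ0 hρ1 hΦ).dimH_image_le (Real.toNNReal_pos.2 hα))
  rwa [ENNReal.le_div_iff_mul_le (.inl (by simpa using hα)) (.inl ENNReal.coe_ne_top), one_mul]
    at this

lemma sum_mem_iterSumset {M : Type*} [AddCommMonoid M] {F : Set M} :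
    ∀ {n : ℕ} (a : Fin n → M), (∀ i, a i ∈ F) → ∑ i, a i ∈ iterSumset F n
  | 0, _, _ => by simp [iterSumset]
  | n + 1, a, ha => by
    rw [Fin.sum_univ_castSucc]
    exact add_mem_add (sum_mem_iterSumset _ fun i => ha _) (ha _)

lemma exists_separated_of_uniformlyPerfectWith {F : Set ℝ} {γ ρ : ℝ} (hFc : IsClosed F)
    (hF : UniformlyPerfectWith γ F) (hγ0 : 0 < γ) (hD : 0 < diam F) {n : ℕ}
    (hρ0 : 0 < ρ) (hρ1 : ρ < 1) (hρ : 4 * n * ρ ≤ γ * (1 - ρ)) :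
    ∃ Φ : (ℕ → Fin (n + 1)) → ℝ, range Φ ⊆ iterSumset F n ∧ ∀ ω ω', ω ≠ ω' →
      γ * (diam F / 2) / 2 * ρ ^ PiNat.firstDiff ω ω' ≤ dist (Φ ω) (Φ ω') := by
  obtain ⟨x₀, hx₀⟩ : F.Nonempty := Set.nonempty_iff_ne_empty.2 (by rintro rfl; simp at hD)
  choose! lo hlo hi hhi hlo_dist hhi_dist hgap using
    fun x (hx : x ∈ F) R (hR : 0 < R) (hRD : R < diam F) => hF.exists_gap hx hR hRD
  set R₀ := diam F / 2
  have hR : ∀ k, 0 < R₀ * ρ ^ k ∧ R₀ * ρ ^ k < diam F := fun k =>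
    ⟨by positivity, (mul_le_of_le_one_right (by positivity) (pow_le_one₀ hρ0.le hρ1.le)).trans_lt
      (half_lt_self hD)⟩
  set m : ℕ → Fin (n + 1) → (Fin n → ℝ) → Fin n → ℝ := fun k j v i =>
    if i.castSucc < j then hi (v i) (R₀ * ρ ^ k) else lo (v i) (R₀ * ρ ^ k)
  set K := univ.pi fun _ : Fin n => F
  have hm : ∀ k j, MapsTo (m k j) K K := fun k j v hv i _ => by
    have hvi : v i ∈ F := hv i trivial
    simp only [m]
    split_ifs
    exacts [hhi _ hvi _ (hR k).1 (hR k).2, hlo _ hvi _ (hR k).1 (hR k).2]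
  have hstep : ∀ k j, ∀ v ∈ K, dist (m k j v) v ≤ R₀ * ρ ^ k := fun k j v hv =>
    (dist_pi_le_iff (hR k).1.le).2 fun i => by
      have hvi : v i ∈ F := hv i trivial
      simp only [m, Real.dist_eq]
      split_ifs
      exacts [(hhi_dist _ hvi _ (hR k).1 (hR k).2).le, (hlo_dist _ hvi _ (hR k).1 (hR k).2).le]
  have hsep : ∀ k, ∀ v ∈ K, ∀ j j', j ≠ j' →
      γ * R₀ * ρ ^ k ≤ dist (∑ i, m k j v i) (∑ i, m k j' v i) := fun k v hv j j' hne => by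
    rw [mul_assoc]
    exact le_dist_sum_ite_sum_ite (by positivity)
      (fun i => hgap _ (hv i trivial) _ (hR k).1 (hR k).2) hne
  obtain ⟨P, hP⟩ := exists_tendsto_cantorBranch (isClosed_set_pi fun _ _ => hFc) hm
    (y₀ := fun _ => x₀) (fun _ _ => hx₀) hstep hρ1
  refine ⟨fun ω => ∑ i, P ω i, range_subset_iff.2 fun ω => sum_mem_iterSumset _
    fun i => (hP ω).1 i trivial, fun ω ω' hne => ?_⟩
  exact le_dist_of_tendsto_cantorBranch (lipschitzWith_sum n) hm (fun _ _ => hx₀) hstep hρ0.le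
    hρ1 hsep (by push_cast; nlinarith [mul_le_mul_of_nonneg_right hρ (by positivity : 0 ≤ R₀)])
    (fun ω => (hP ω).2) hne

theorem le_dimH_iterSumset {F : Set ℝ} {γ : ℝ} (hFc : IsClosed F) (hF : UniformlyPerfectWith γ F)
    (hγ0 : 0 < γ) (hγ1 : γ < 1) (hD : 0 < diam F) {n : ℕ} (hn : 0 < n) :
    ENNReal.ofReal (Real.log (n + 1) / Real.log (8 / γ * (n + 1))) ≤ dimH (iterSumset F n) := by
  set ρ := (8 / γ * (n + 1))⁻¹
  have hρ0 : 0 < ρ := by positivity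
  have hρ : 8 * (n + 1) * ρ = γ := by simp only [ρ]; field_simp
  have hρ1 : ρ < 1 / 8 := by nlinarith
  obtain ⟨Φ, hΦF, hΦ⟩ := exists_separated_of_uniformlyPerfectWith hFc hF hγ0 hD hρ0
    (by linarith) (by nlinarith)
  calc ENNReal.ofReal (Real.log (n + 1) / Real.log (8 / γ * (n + 1)))
      = ENNReal.ofReal (Real.log ((n + 1 : ℕ) : ℝ) / Real.log ρ⁻¹) := by
        rw [inv_inv]; push_cast; rfl
    _ ≤ dimH (range Φ) :=
        le_dimH_range_of_separated (by omega) (by positivity) hρ0 (by linarith) hΦ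
    _ ≤ dimH (iterSumset F n) := dimH_mono hΦF

lemma tendsto_log_div_log_const_mul {a : ℝ} (ha : 0 < a) :
    Tendsto (fun x => Real.log x / Real.log (a * x)) atTop (𝓝 1) := by
  have h : Tendsto (fun x => (1 + Real.log a / Real.log x)⁻¹) atTop (𝓝 1) := by
    simpa using ((tendsto_const_nhds (x := Real.log a)).div_atTop
      Real.tendsto_log_atTop).const_add 1 |>.inv₀ (by norm_num)
  refine h.congr' ?_
  filter_upwards [eventually_gt_atTop 0, Real.tendsto_log_atTop.eventually_gt_atTop |Real.log a|]
    with x hx hlog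
  have : Real.log x ≠ 0 := ((abs_nonneg _).trans_lt hlog).ne'
  have : Real.log a + Real.log x ≠ 0 := by linarith [neg_abs_le (Real.log a)]
  rw [Real.log_mul ha.ne' hx.ne', add_comm]
  field_simp

/-- If `F ⊆ ℝ` is closed with lower dimension at least `s > 0`, then the Hausdorff
dimension of the iterated sumsets `nF` tends to `1`. -/
theorem stmt15 (F : Set ℝ) (hFc : IsClosed F) (s : ℝ) (hs : 0 < s)
    (hL : s ≤ lowerDim F) :
    Filter.Tendsto (fun n : ℕ => dimH (iterSumset F n)) Filter.atTop (nhds 1) := by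
  have hpos := hs.trans_le hL
  obtain ⟨γ, hγ0, hγ1, hF⟩ := exists_uniformlyPerfectWith_of_lowerDim_pos hpos
  have hshift : Tendsto (fun n : ℕ => (n : ℝ) + 1) atTop atTop :=
    tendsto_atTop_add_const_right atTop 1 tendsto_natCast_atTop_atTop
  have hlim := ENNReal.tendsto_ofReal
    ((tendsto_log_div_log_const_mul (a := 8 / γ) (by positivity)).comp hshift)
  rw [ENNReal.ofReal_one] at hlim
  refine tendsto_of_tendsto_of_tendsto_of_le_of_le' hlim tendsto_const_nhds ?_
    (.of_forall fun n => (dimH_mono (subset_univ _)).trans Real.dimH_univ.le)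
  filter_upwards [eventually_gt_atTop 0] with n hn
  exact le_dimH_iterSumset hFc hF hγ0 hγ1 (diam_pos_of_lowerDim_pos hpos) hn
end
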